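/- arXiv:1310.4626 — 2 statements merged into one kernel-verified Lean document; each statement's English description precedes it below -/
import Mathlib

section
/- Let A be a ring, G a finite group acting on A with |G| invertible in A, and M a simple A*G-module. Then the fixed submodule M^G is either zero or a simple A^G-module. -/
/-- **Invariants of a simple module.**
Let `A` be a ring and `G` a finite group acting on `A` by ring automorphisms with `|G|`
invertible in `A`.  Let `M` be a simple `A*G`-module, i.e. `M ≠ 0` and every `G`-stable
`A`-submodule of `M` is `⊥` or `⊤`.  Then the fixed submodule `M^G` is either zero or a simple
`A^G`-module.  (Simplicity of `M^G` over `A^G` is expressed by: `M^G ≠ 0` and every nonzero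
element `t ∈ M^G` generates `M^G` over `A^G`, i.e. every `ξ ∈ M^G` is of the form `a • t`
with `a ∈ A^G`.) -/
theorem invariants_of_simple (A : Type*) [Ring A] (G : Type*) [Group G] [Fintype G]
    [MulSemiringAction G A] (hinv : IsUnit (Fintype.card G : A))
    (M : Type*) [AddCommGroup M] [Module A M] [DistribMulAction G M]
    (compat : ∀ (σ : G) (a : A) (m : M), σ • (a • m) = (σ • a) • (σ • m))
    (hM : Nontrivial M)
    (hsimple : ∀ N : Submodule A M, (∀ (σ : G), ∀ m ∈ N, σ • m ∈ N) → N = ⊥ ∨ N = ⊤) :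
    (∀ m : M, (∀ σ : G, σ • m = m) → m = 0) ∨
    ((∃ m : M, (∀ σ : G, σ • m = m) ∧ m ≠ 0) ∧
      ∀ t : M, (∀ σ : G, σ • t = t) → t ≠ 0 →
        ∀ ξ : M, (∀ σ : G, σ • ξ = ξ) → ∃ a : A, (∀ σ : G, σ • a = a) ∧ a • t = ξ) := by
  by_cases h0 : ∀ m : M, (∀ σ : G, σ • m = m) → m = 0
  · exact Or.inl h0
  · push_neg at h0
    obtain ⟨m0, hm0fix, hm0ne⟩ := h0
    refine Or.inr ⟨⟨m0, hm0fix, hm0ne⟩, ?_⟩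
    intro t htfix htne ξ hξfix
    -- the cyclic submodule A•t is G-stable
    have hstab : ∀ (σ : G), ∀ m ∈ Submodule.span A ({t} : Set M),
        σ • m ∈ Submodule.span A ({t} : Set M) := by
      intro σ m hm
      rw [Submodule.mem_span_singleton] at hm ⊢
      obtain ⟨b, rfl⟩ := hm
      exact ⟨σ • b, by rw [compat, htfix]⟩
    rcases hsimple _ hstab with hbot | htop
    · exfalso
      have : t ∈ Submodule.span A ({t} : Set M) := Submodule.mem_span_singleton_self t
      rw [hbot] at this
      exact htne (by simpa using this)
    · -- every element of M is of the form b • t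
      have : ξ ∈ Submodule.span A ({t} : Set M) := htop ▸ Submodule.mem_top
      rw [Submodule.mem_span_singleton] at this
      obtain ⟨b, hb⟩ := this
      -- the inverse c of |G|
      obtain ⟨u, hu⟩ := hinv
      set c : A := ((u⁻¹ : Aˣ) : A) with hc
      have hc1 : c * (Fintype.card G : A) = 1 := by
        rw [← hu]; exact u.inv_mul
      have hc2 : (Fintype.card G : A) * c = 1 := by
        rw [← hu]; exact u.mul_inv
    -- c is G-fixed
      have hcfix : ∀ σ : G, σ • c = c := by
        intro σ
        have hcard : σ • (Fintype.card G : A) = (Fintype.card G : A) := by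
          exact map_natCast (MulSemiringAction.toRingHom G A σ) (Fintype.card G)
        have h1 : (σ • c) * (Fintype.card G : A) = 1 := by
          have h := congrArg (fun x => σ • x) hc1
          simpa [smul_mul', hcard] using h
        calc σ • c = (σ • c) * ((Fintype.card G : A) * c) := by rw [hc2, mul_one]
          _ = ((σ • c) * (Fintype.card G : A)) * c := by rw [mul_assoc]
          _ = c := by rw [h1, one_mul]
      refine ⟨c * ∑ σ : G, σ • b, ?_, ?_⟩
      · intro σ
        rw [smul_mul', hcfix σ, Finset.smul_sum]
        congr 1
        refine Fintype.sum_equiv (Equiv.mulLeft σ) _ _ ?_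
        intro τ
        simp [mul_smul]
      · rw [mul_smul, Finset.sum_smul]
        have hterm : ∀ σ : G, (σ • b) • t = ξ := by
          intro σ
          rw [← htfix σ, ← compat, hb, hξfix]
        simp only [hterm]
        rw [Finset.sum_const, Finset.card_univ, ← Nat.cast_smul_eq_nsmul A, ← mul_smul, hc1,
          one_smul]
end

section
/- Let A be a ring, G a finite group acting on A with |G| invertible in A. If M is an A*G-module of finite length (as an A*G-module), then M^G has finite length as an A^G-module. -/
open Submodule in
/-- A chain of submodules starting at `⊥` whose steps are equalities or coverings has all its
members of finite length. -/
theorem chain_isFiniteLength {R M : Type*} [Ring R] [AddCommGroup M] [Module R M]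
    {n : ℕ} (d : Fin (n + 1) → Submodule R M) (hbot : d 0 = ⊥)
    (hstep : ∀ i : Fin n, d i.castSucc = d i.succ ∨ d i.castSucc ⋖ d i.succ) :
    ∀ i, IsFiniteLength R (d i) := by
  intro i
  induction' i using Fin.induction with i ih
  · rw [hbot]; exact .of_subsingleton
  rcases hstep i with h | cov
  · exact h ▸ ih
  · have := (covBy_iff_quot_is_simple cov.le).mp cov
    have e := ((d i.castSucc).comap (d i.succ).subtype).equivMapOfInjective
      _ (Submodule.injective_subtype _)
    rw [Submodule.map_comap_subtype, inf_of_le_right cov.le] at e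
    exact .of_simple_quotient (e.symm.isFiniteLength ih)

/-- The fixed subring `A^G`. -/
def fixedSubring (G A : Type*) [Group G] [Ring A] [MulSemiringAction G A] : Subring A where
  carrier := MulAction.fixedPoints G A
  mul_mem' {a b} ha hb := fun σ => by rw [smul_mul', ha σ, hb σ]
  one_mem' := fun σ => smul_one σ
  add_mem' {a b} ha hb := fun σ => by rw [smul_add, ha σ, hb σ]
  zero_mem' := fun σ => smul_zero σ
  neg_mem' {a} ha := fun σ => by rw [smul_neg, ha σ]

/-- The fixed submodule `M^G` of an `A*G`-module `M`, as a module over `A^G`. -/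
def fixedSubmodule (G A : Type*) [Group G] [Ring A] [MulSemiringAction G A]
    (M : Type*) [AddCommGroup M] [Module A M] [DistribMulAction G M]
    (compat : ∀ (σ : G) (a : A) (m : M), σ • (a • m) = (σ • a) • (σ • m)) :
    Submodule (fixedSubring G A) M where
  carrier := MulAction.fixedPoints G M
  add_mem' {m m'} hm hm' := fun σ => by rw [smul_add, hm σ, hm' σ]
  zero_mem' := fun σ => smul_zero σ
  smul_mem' c m hm := fun σ => by
    show σ • ((c : A) • m) = (c : A) • m
    rw [compat σ (c : A) m, c.2 σ, hm σ]

set_option synthInstance.maxHeartbeats 1000000 in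
/-- **Finite length descends to invariants.**
Let `A` be a ring, `G` a finite group acting on `A` by ring automorphisms with `|G|` invertible
in `A`, and `M` an `A*G`-module of finite length as an `A*G`-module (i.e. it admits a finite
composition series `⊥ = N₀ < N₁ < ⋯ < Nₙ = ⊤` of `G`-stable `A`-submodules with no `G`-stable
`A`-submodule strictly between consecutive terms).  Then the fixed submodule `M^G` has finite
length as an `A^G`-module. -/
theorem invariants_finite_length (A : Type*) [Ring A] (G : Type*) [Group G] [Fintype G]
    [MulSemiringAction G A] (hinv : IsUnit (Fintype.card G : A))
    (M : Type*) [AddCommGroup M] [Module A M] [DistribMulAction G M]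
    (compat : ∀ (σ : G) (a : A) (m : M), σ • (a • m) = (σ • a) • (σ • m))
    (hlen : ∃ (n : ℕ) (c : Fin (n + 1) → Submodule A M),
      (∀ i, ∀ (σ : G), ∀ m ∈ c i, σ • m ∈ c i) ∧
      c 0 = ⊥ ∧ c (Fin.last n) = ⊤ ∧
      ∀ i : Fin n, c i.castSucc < c i.succ ∧
        ∀ N : Submodule A M, (∀ (σ : G), ∀ m ∈ N, σ • m ∈ N) →
          c i.castSucc ≤ N → N ≤ c i.succ → N = c i.castSucc ∨ N = c i.succ) :
    IsFiniteLength (fixedSubring G A) (fixedSubmodule G A M compat) := by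
  obtain ⟨n, c, hstab, hbot, htop, hstep⟩ := hlen
  obtain ⟨u, hu⟩ := hinv
  have hcard_fixed : ∀ σ : G, σ • ((Fintype.card G : A)) = (Fintype.card G : A) := fun σ =>
    map_natCast (MulSemiringAction.toRingHom G A σ) (Fintype.card G)
  have hu_fixed : ∀ σ : G, σ • (↑u⁻¹ : A) = (↑u⁻¹ : A) := by
    intro σ
    have h1 : (σ • (↑u⁻¹ : A)) * (Fintype.card G : A) = 1 := by
      rw [← hcard_fixed σ, ← hu, ← smul_mul', Units.inv_mul, smul_one]
    calc σ • (↑u⁻¹ : A) = (σ • (↑u⁻¹ : A)) * ((Fintype.card G : A) * ↑u⁻¹) := by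
            rw [← hu, Units.mul_inv, mul_one]
      _ = (↑u⁻¹ : A) := by rw [← mul_assoc, h1, one_mul]
  -- the averaging (Reynolds) operator
  set avg : M → M := fun m => (↑u⁻¹ : A) • ∑ σ : G, σ • m with havg
  have avg_add : ∀ m m' : M, avg (m + m') = avg m + avg m' := by
    intro m m'
    simp only [havg, smul_add, Finset.sum_add_distrib]
  have avg_sum : ∀ (k : ℕ) (v : Fin k → M), avg (∑ j, v j) = ∑ j, avg (v j) := by
    intro k v
    exact map_sum (AddMonoidHom.mk' avg avg_add) v Finset.univ
  have avg_fixed : ∀ m : M, ∀ τ : G, τ • avg m = avg m := by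
    intro m τ
    show τ • ((↑u⁻¹ : A) • ∑ σ : G, σ • m) = (↑u⁻¹ : A) • ∑ σ : G, σ • m
    rw [compat, hu_fixed, Finset.smul_sum]
    congr 1
    rw [← Equiv.sum_comp (Equiv.mulLeft τ) (fun σ => σ • m)]
    refine Finset.sum_congr rfl fun σ _ => ?_
    simp [mul_smul]
  have avg_of_fixed : ∀ m : M, (∀ σ : G, σ • m = m) → avg m = m := by
    intro m hm
    show (↑u⁻¹ : A) • ∑ σ : G, σ • m = m
    simp only [hm]
    rw [Finset.sum_const, Finset.card_univ, ← Nat.cast_smul_eq_nsmul A, smul_smul, ← hu,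
      Units.inv_mul, one_smul]
  have avg_smul_fixed : ∀ (a : A) (m : M), (∀ σ : G, σ • m = m) →
      avg (a • m) = ((↑u⁻¹ : A) * ∑ σ : G, σ • a) • m := by
    intro a m hm
    show (↑u⁻¹ : A) • ∑ σ : G, σ • (a • m) = _
    simp only [compat, hm]
    rw [← Finset.sum_smul, smul_smul]
  have avgA_fixed : ∀ (a : A) (τ : G),
      τ • ((↑u⁻¹ : A) * ∑ σ : G, σ • a) = (↑u⁻¹ : A) * ∑ σ : G, σ • a := by
    intro a τ
    rw [smul_mul', hu_fixed]
    congr 1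
    rw [Finset.smul_sum, ← Equiv.sum_comp (Equiv.mulLeft τ) (fun σ => σ • a)]
    refine Finset.sum_congr rfl fun σ _ => ?_
    simp [mul_smul]
  have avg_mem : ∀ (L : Submodule A M), (∀ σ : G, ∀ m ∈ L, σ • m ∈ L) →
      ∀ m ∈ L, avg m ∈ L := by
    intro L hL m hm
    exact L.smul_mem _ (Submodule.sum_mem L fun σ _ => hL σ m hm)
  -- the chain of fixed submodules
  set R := fixedSubring G A with hR
  set F := fixedSubmodule G A M compat with hF
  set dd : Fin (n + 1) → Submodule R ↥F := fun i =>
    { carrier := {x : ↥F | (x : M) ∈ c i}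
      add_mem' := fun {a b} ha hb => by
        show ((a + b : ↥F) : M) ∈ c i
        rw [Submodule.coe_add]
        exact (c i).add_mem ha hb
      zero_mem' := by
        show ((0 : ↥F) : M) ∈ c i
        rw [Submodule.coe_zero]
        exact (c i).zero_mem
      smul_mem' := fun r x hx => (c i).smul_mem (r : A) hx } with hdd
  have mem_dd : ∀ (i : Fin (n + 1)) (x : ↥F), x ∈ dd i ↔ (x : M) ∈ c i := fun _ _ => Iff.rfl
  -- key: the only fixed submodules between `dd i.castSucc` and `dd i.succ` are the endpoints
  have hkey : ∀ i : Fin n, ∀ N : Submodule R ↥F, dd i.castSucc ≤ N → N ≤ dd i.succ →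
      N = dd i.castSucc ∨ N = dd i.succ := by
    intro i N hN1 hN2
    set S : Set M := Subtype.val '' (N : Set ↥F) with hS
    have hSfix : ∀ s ∈ S, ∀ σ : G, σ • s = s := by
      rintro s ⟨x, _, rfl⟩ σ
      exact x.2 σ
    have hspan_stab : ∀ σ : G, ∀ z ∈ Submodule.span A S, σ • z ∈ Submodule.span A S := by
      intro σ z hz
      induction hz using Submodule.span_induction with
      | mem s hs => rw [hSfix s hs σ]; exact Submodule.subset_span hs
      | zero => rw [smul_zero]; exact Submodule.zero_mem _
      | add x y _ _ hx hy => rw [smul_add]; exact Submodule.add_mem _ hx hy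
      | smul a x _ hx => rw [compat]; exact Submodule.smul_mem _ _ hx
    set L : Submodule A M := c i.castSucc ⊔ Submodule.span A S with hL
    have hLstab : ∀ σ : G, ∀ m ∈ L, σ • m ∈ L := by
      intro σ m hm
      rw [hL, Submodule.mem_sup] at hm ⊢
      obtain ⟨y, hy, z, hz, rfl⟩ := hm
      exact ⟨σ • y, hstab _ σ y hy, σ • z, hspan_stab σ z hz, (smul_add σ y z).symm⟩
    have hL1 : c i.castSucc ≤ L := le_sup_left
    have hL2 : L ≤ c i.succ := by
      refine sup_le (le_of_lt (hstep i).1) (Submodule.span_le.mpr ?_)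
      rintro s ⟨x, hx, rfl⟩
      exact (mem_dd i.succ x).mp (hN2 hx)
    -- `N` consists exactly of the fixed elements of `L`
    have hNL : ∀ x : ↥F, (x : M) ∈ L → x ∈ N := by
      intro x hxL
      rw [hL, Submodule.mem_sup] at hxL
      obtain ⟨y, hy, z, hz, hyz⟩ := hxL
      -- average of z lies in (the image of) N
      obtain ⟨k, f, g, hsum⟩ := Submodule.mem_span_set'.mp hz
      have hterm : ∀ j : Fin k, ∃ w ∈ N, (w : M) = avg (f j • (g j : M)) := by
        intro j
        obtain ⟨xj, hxj, hxjval⟩ := (g j).2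
        have hr0mem : (↑u⁻¹ : A) * ∑ σ : G, σ • (f j) ∈ R := fun σ => avgA_fixed (f j) σ
        set r0 : ↥R := ⟨(↑u⁻¹ : A) * ∑ σ : G, σ • (f j), hr0mem⟩ with hr0
        refine ⟨r0 • xj, N.smul_mem _ hxj, ?_⟩
        have hfix : ∀ σ : G, σ • ((g j : M)) = (g j : M) := hSfix _ (g j).2
        rw [avg_smul_fixed (f j) _ hfix]
        show (↑r0 : A) • (xj : M) = _
        rw [hxjval]
      choose w hw hwval using hterm
      have havgz : avg z ∈ N.map F.subtype := by
        rw [← hsum, avg_sum]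
        refine Submodule.sum_mem _ fun j _ => ?_
        exact ⟨w j, hw j, hwval j⟩
      obtain ⟨wz, hwz, hwzval⟩ := havgz
      -- average of y lies in dd i.castSucc hence in N
      have hyfix : ∀ σ : G, σ • avg y = avg y := avg_fixed y
      have hy' : (⟨avg y, hyfix⟩ : ↥F) ∈ N :=
        hN1 ((mem_dd i.castSucc _).mpr (avg_mem _ (hstab _) y hy))
      have : (⟨avg y, hyfix⟩ : ↥F) + wz = x := by
        apply Subtype.ext
        show avg y + (wz : M) = (x : M)
        rw [show ((wz : M)) = avg z from hwzval, ← avg_add, hyz]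
        exact avg_of_fixed _ x.2
      rw [← this]
      exact N.add_mem hy' hwz
    rcases (hstep i).2 L hLstab hL1 hL2 with h | h
    · left
      refine le_antisymm (fun x hx => ?_) hN1
      rw [mem_dd, ← h]
      exact Submodule.mem_sup_right (Submodule.subset_span ⟨x, hx, rfl⟩)
    · right
      refine le_antisymm hN2 (fun x hx => ?_)
      exact hNL x (h ▸ (mem_dd i.succ x).mp hx)
  -- the chain has equal-or-covering steps
  have hsteps : ∀ i : Fin n, dd i.castSucc = dd i.succ ∨ dd i.castSucc ⋖ dd i.succ := by
    intro i
    by_cases heq : dd i.castSucc = dd i.succ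
    · exact Or.inl heq
    · right
      have hle : dd i.castSucc ≤ dd i.succ := fun x hx =>
        (mem_dd _ x).mpr (le_of_lt (hstep i).1 ((mem_dd _ x).mp hx))
      refine ⟨lt_of_le_of_ne hle heq, fun N h1 h2 => ?_⟩
      rcases hkey i N h1.le h2.le with h | h
      · exact absurd h.symm h1.ne
      · exact absurd h h2.ne
  have hdd0 : dd 0 = ⊥ := by
    apply le_antisymm
    · intro x hx
      have : (x : M) ∈ (⊥ : Submodule A M) := hbot ▸ (mem_dd 0 x).mp hx
      rw [Submodule.mem_bot] at this
      rw [Submodule.mem_bot]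
      exact Subtype.ext this
    · exact bot_le
  have hddlast : dd (Fin.last n) = ⊤ := by
    refine le_antisymm le_top fun x _ => ?_
    rw [mem_dd, htop]
    exact Submodule.mem_top
  have hfl := chain_isFiniteLength dd hdd0 hsteps (Fin.last n)
  rw [hddlast] at hfl
  exact Submodule.topEquiv.isFiniteLength hfl
end
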